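/- Let n ≥ 2 and τ ∈ [(n-2)·π/2, n·π/2). Then the set Γ^τ = {λ ∈ ℝ^n : Σ_{i=1}^n arctan(λ_i) > τ} is a convex subset of ℝ^n. -/

import Mathlib

/-!
Write `θ(x) = ∑ arctan xᵢ`. Above the critical phase, `θ(x) > (n - 2)π/2`, the angles
`π/2 - arctan xᵢ ∈ (0, π)` sum to less than `π`. Hence `xᵢ + xⱼ > 0` for `i ≠ j`, and if some
`xⱼ < 0` then `∑_{i ≠ j} 1/xᵢ < -1/xⱼ` (subadditivity of `arctan` on `[0, ∞)`). By Cauchy–Schwarz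
the form `∑ xᵢ cᵢ²` is then positive on nonzero `c` with `∑ cᵢ = 0`. Along a line `x + s q`, at a
critical point of `θ` the vector `cᵢ = qᵢ / (1 + xᵢ²)` has `∑ cᵢ = 0` and the second derivative is
`-2 ∑ xᵢ cᵢ² < 0`, so `θ` has no local minimum there.

If `θ ≤ τ` somewhere on a segment whose endpoints satisfy `θ > τ`, translate the segment in the
direction `(1, …, 1)`, along which `θ` increases, until the minimum of `θ` on it equals `τ`. That
minimum is attained at an interior point lying above the critical phase: a contradiction.
-/

open Real Finset Set Filter Topology

lemma arctan_add_le_of_nonneg {a b : ℝ} (ha : 0 ≤ a) (hb : 0 ≤ b) :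
    arctan (a + b) ≤ arctan a + arctan b := by
  rcases lt_or_ge (a * b) 1 with hab | hab
  · rw [arctan_add hab]
    apply arctan_strictMono.monotone
    rw [le_div_iff₀ (by linarith)]
    nlinarith [mul_nonneg (add_nonneg ha hb) (mul_nonneg ha hb)]
  · have ha' : 0 < a := by nlinarith
    have hinv : arctan a⁻¹ ≤ arctan b :=
      arctan_strictMono.monotone <| (inv_le_iff_one_le_mul₀' ha').2 hab
    rw [arctan_inv_of_pos ha'] at hinv
    linarith [arctan_lt_pi_div_two (a + b)]

lemma arctan_sum_le_sum_arctan {ι : Type*} {s : Finset ι} {u : ι → ℝ} (hu : ∀ i ∈ s, 0 ≤ u i) :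
    arctan (∑ i ∈ s, u i) ≤ ∑ i ∈ s, arctan (u i) :=
  le_sum_of_subadditive_on_pred arctan (0 ≤ ·) arctan_zero.le
    (fun _ _ => arctan_add_le_of_nonneg) (fun _ _ => add_nonneg) u hu

lemma hasDerivAt_add_mul (a b s : ℝ) : HasDerivAt (fun s => a + s * b) b s := by
  simpa using ((hasDerivAt_id s).mul_const b).const_add a

lemma exists_isLocalMin_eq_of_monotone {F : ℝ → ℝ → ℝ} (hF : Continuous (Function.uncurry F))
    (hmono : ∀ t, Monotone fun r => F r t) {τ R t₀ : ℝ} (hR : 0 ≤ R)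
    (hτR : ∀ t ∈ Icc (0 : ℝ) 1, τ < F R t) (h₀ : τ < F 0 0) (h₁ : τ < F 0 1)
    (ht₀ : t₀ ∈ Icc (0 : ℝ) 1) (hle : F 0 t₀ ≤ τ) :
    ∃ r, ∃ t ∈ Ioo (0 : ℝ) 1, F r t = τ ∧ IsLocalMin (F r) t := by
  set g := fun r => sInf (F r '' Icc 0 1)
  have hg : Continuous g := isCompact_Icc.continuous_sInf hF
  have hmin : ∀ r, ∃ t ∈ Icc (0 : ℝ) 1, IsMinOn (F r) (Icc 0 1) t ∧ F r t = g r := fun r => by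
    obtain ⟨t, ht, hmin⟩ := isCompact_Icc.exists_isMinOn (f := F r)
      (nonempty_Icc.2 zero_le_one) (hF.comp (Continuous.prodMk_right r)).continuousOn
    refine ⟨t, ht, hmin, (IsLeast.csInf_eq ⟨mem_image_of_mem _ ht, ?_⟩).symm⟩
    exact Set.forall_mem_image.2 fun _ hs => hmin hs
  have hg0 : g 0 ≤ τ := by
    obtain ⟨t, -, hmin, hgt⟩ := hmin 0
    exact hgt ▸ (hmin ht₀).trans hle
  have hgR : τ < g R := by
    obtain ⟨t, ht, -, hgt⟩ := hmin R
    exact hgt ▸ hτR t ht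
  obtain ⟨r, hr, hgr⟩ := intermediate_value_Icc hR hg.continuousOn ⟨hg0, hgR.le⟩
  obtain ⟨t, ht, hmin, hgt⟩ := hmin r
  have hFt : F r t = τ := hgt.trans hgr
  have hend : ∀ s, τ < F 0 s → t ≠ s := fun s hs hts =>
    (hFt ▸ hts ▸ hs).not_ge (hmono t hr.1)
  have ht' : t ∈ Ioo (0 : ℝ) 1 := ⟨ht.1.lt_of_ne (hend 0 h₀).symm, ht.2.lt_of_ne (hend 1 h₁)⟩
  exact ⟨r, t, ht', hFt, hmin.isLocalMin (Icc_mem_nhds ht'.1 ht'.2)⟩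

variable {ι : Type*} [Fintype ι]

def IsSupercritical (x : ι → ℝ) : Prop :=
  ((Fintype.card ι : ℝ) - 2) * π / 2 < ∑ i, arctan (x i)

namespace IsSupercritical

variable {x : ι → ℝ}

lemma sum_pi_div_two_sub_arctan_lt (hx : IsSupercritical x) :
    ∑ i, (π / 2 - arctan (x i)) < π := by
  rw [sum_sub_distrib, sum_const, card_univ, nsmul_eq_mul]
  unfold IsSupercritical at hx
  linarith

lemma add_pos (hx : IsSupercritical x) {i j : ι} (hij : i ≠ j) : 0 < x i + x j := by
  have hpair : (π / 2 - arctan (x i)) + (π / 2 - arctan (x j)) ≤ ∑ k, (π / 2 - arctan (x k)) := by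
    classical
    rw [← sum_pair (f := fun k => π / 2 - arctan (x k)) hij]
    exact sum_le_sum_of_subset_of_nonneg (subset_univ _)
      fun k _ _ => sub_nonneg.2 (arctan_lt_pi_div_two _).le
  have : arctan (-x j) < arctan (x i) := by
    linarith [arctan_neg (x j), hx.sum_pi_div_two_sub_arctan_lt]
  linarith [arctan_strictMono.lt_iff_lt.1 this]

lemma sum_inv_lt [DecidableEq ι] (hx : IsSupercritical x) {j : ι} (hj : x j < 0)
    (hpos : ∀ i ≠ j, 0 < x i) : ∑ i ∈ univ.erase j, (x i)⁻¹ < (-x j)⁻¹ := by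
  have hsplit := add_sum_erase univ (fun i => π / 2 - arctan (x i)) (mem_univ j)
  have hinv : ∀ i ∈ univ.erase j, π / 2 - arctan (x i) = arctan (x i)⁻¹ := fun i hi =>
    (arctan_inv_of_pos (hpos i (ne_of_mem_erase hi))).symm
  rw [sum_congr rfl hinv] at hsplit
  have hj' := arctan_inv_of_pos (neg_pos.2 hj)
  rw [arctan_neg] at hj'
  refine arctan_strictMono.lt_iff_lt.1 ((arctan_sum_le_sum_arctan fun i hi => ?_).trans_lt ?_)
  · exact (inv_pos.2 (hpos i (ne_of_mem_erase hi))).le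
  · linarith [hx.sum_pi_div_two_sub_arctan_lt]

lemma sum_mul_sq_pos (hx : IsSupercritical x) {c : ι → ℝ} (hc : c ≠ 0) (hsum : ∑ i, c i = 0) :
    0 < ∑ i, x i * c i ^ 2 := by
  classical
  obtain ⟨i₀, hi₀⟩ : ∃ i, c i ≠ 0 := Function.ne_iff.1 hc
  by_cases hneg : ∃ j, x j < 0
  · obtain ⟨j, hj⟩ := hneg
    have hpos : ∀ i ≠ j, 0 < x i := fun i hij => by linarith [hx.add_pos hij]
    set S := ∑ i ∈ univ.erase j, x i * c i ^ 2
    have hcj : c j = -∑ i ∈ univ.erase j, c i := by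
      linarith [add_sum_erase univ c (mem_univ j)]
    have hS : 0 < S := by
      refine lt_of_le_of_ne (sum_nonneg fun i hi => ?_) fun hS0 => hi₀ ?_
      · exact mul_nonneg (hpos i (ne_of_mem_erase hi)).le (sq_nonneg _)
      have hzero : ∀ i ∈ univ.erase j, c i = 0 := fun i hi => by
        have := (sum_eq_zero_iff_of_nonneg fun k hk =>
          mul_nonneg (hpos k (ne_of_mem_erase hk)).le (sq_nonneg (c k))).1 hS0.symm i hi
        simpa [(hpos i (ne_of_mem_erase hi)).ne'] using this
      by_cases h : i₀ = j
      · rw [h, hcj, sum_eq_zero hzero, neg_zero]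
      · exact hzero i₀ (mem_erase.2 ⟨h, mem_univ _⟩)
    have hCS : c j ^ 2 ≤ S * ∑ i ∈ univ.erase j, (x i)⁻¹ := by
      rw [hcj, neg_sq]
      refine sum_sq_le_sum_mul_sum_of_sq_le_mul _ (fun i hi => ?_) (fun i hi => ?_) fun i hi => ?_
      · exact mul_nonneg (hpos i (ne_of_mem_erase hi)).le (sq_nonneg _)
      · exact (inv_pos.2 (hpos i (ne_of_mem_erase hi))).le
      · rw [mul_right_comm, mul_inv_cancel₀ (hpos i (ne_of_mem_erase hi)).ne', one_mul]
    have hlt : -x j * c j ^ 2 < S := calc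
      -x j * c j ^ 2 ≤ -x j * (S * ∑ i ∈ univ.erase j, (x i)⁻¹) :=
        mul_le_mul_of_nonneg_left hCS (by linarith)
      _ < -x j * (S * (-x j)⁻¹) :=
        mul_lt_mul_of_pos_left (mul_lt_mul_of_pos_left (hx.sum_inv_lt hj hpos) hS) (by linarith)
      _ = S := by rw [mul_left_comm, mul_inv_cancel₀ (neg_pos.2 hj).ne', mul_one]
    rw [← add_sum_erase univ _ (mem_univ j)]
    linarith
  · push Not at hneg
    obtain ⟨i₁, hi₁, hci₁⟩ : ∃ i₁, i₁ ≠ i₀ ∧ c i₁ ≠ 0 := by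
      by_contra! h
      exact hi₀ (by rwa [sum_eq_single i₀ (fun i _ hi => h i hi) (by simp)] at hsum)
    have hnonneg : ∀ i ∈ Finset.univ, 0 ≤ x i * c i ^ 2 := fun i _ =>
      mul_nonneg (hneg i) (sq_nonneg _)
    refine lt_of_le_of_ne (sum_nonneg hnonneg) fun h0 => ?_
    have hvanish : ∀ i, c i ≠ 0 → x i = 0 := fun i hci => by
      simpa [hci] using (sum_eq_zero_iff_of_nonneg hnonneg).1 h0.symm i (mem_univ i)
    linarith [hx.add_pos hi₁, hvanish i₀ hi₀, hvanish i₁ hci₁]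

end IsSupercritical

lemma not_isLocalMin_of_deriv_deriv_neg {f : ℝ → ℝ} {x₀ : ℝ} (hf : deriv (deriv f) x₀ < 0)
    (hd : deriv f x₀ = 0) (hc : ContinuousAt f x₀) : ¬IsLocalMin f x₀ := by
  intro hmin
  have hconst : f =ᶠ[𝓝 x₀] fun _ => f x₀ :=
    (hmin.and (isLocalMax_of_deriv_deriv_neg hf hd hc)).mono fun _ h => le_antisymm h.2 h.1
  have hderiv : deriv f =ᶠ[𝓝 x₀] fun _ => 0 :=
    hconst.eventuallyEq_nhds.mono fun _ h => by rw [h.deriv_eq, deriv_const]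
  rw [hderiv.deriv_eq, deriv_const] at hf
  exact hf.false

section Line

variable (p q : ι → ℝ)

lemma hasDerivAt_sum_arctan_line (s : ℝ) :
    HasDerivAt (fun s => ∑ i, arctan (p i + s * q i))
      (∑ i, q i * (1 + (p i + s * q i) ^ 2)⁻¹) s :=
  HasDerivAt.fun_sum fun i _ => ((hasDerivAt_add_mul (p i) (q i) s).arctan).congr_deriv (by ring)

lemma hasDerivAt_sum_inv_one_add_sq_line (s : ℝ) :
    HasDerivAt (fun s => ∑ i, q i * (1 + (p i + s * q i) ^ 2)⁻¹)
      (-2 * ∑ i, (p i + s * q i) * (q i * (1 + (p i + s * q i) ^ 2)⁻¹) ^ 2) s := by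
  rw [mul_sum]
  refine HasDerivAt.fun_sum fun i _ => ?_
  have hne : 1 + (p i + s * q i) ^ 2 ≠ 0 := by positivity
  have hw := (((hasDerivAt_add_mul (p i) (q i) s).fun_pow 2).const_add 1).inv hne
  refine (hw.const_mul (q i)).congr_deriv ?_
  field_simp
  ring

lemma IsSupercritical.not_isLocalMin_sum_arctan_line {t : ℝ}
    (hx : IsSupercritical fun i => p i + t * q i) (hq : q ≠ 0) :
    ¬IsLocalMin (fun s => ∑ i, arctan (p i + s * q i)) t := by
  intro hmin
  have hderiv : deriv (fun s => ∑ i, arctan (p i + s * q i)) =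
      fun s => ∑ i, q i * (1 + (p i + s * q i) ^ 2)⁻¹ :=
    funext fun s => (hasDerivAt_sum_arctan_line p q s).deriv
  have hcrit := hmin.hasDerivAt_eq_zero (hasDerivAt_sum_arctan_line p q t)
  have hc : (fun i => q i * (1 + (p i + t * q i) ^ 2)⁻¹) ≠ 0 := by
    obtain ⟨i, hi⟩ := Function.ne_iff.1 hq
    exact Function.ne_iff.2 ⟨i, mul_ne_zero hi (by positivity)⟩
  refine not_isLocalMin_of_deriv_deriv_neg ?_ (by rw [hderiv]; exact hcrit)
    (hasDerivAt_sum_arctan_line p q t).continuousAt hmin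
  rw [hderiv, (hasDerivAt_sum_inv_one_add_sq_line p q t).deriv]
  linarith [hx.sum_mul_sq_pos hc hcrit]

end Line

lemma exists_forall_lt_sum_arctan_add (p q : ι → ℝ) {τ : ℝ} (hτ : τ < ∑ i, arctan (p i)) :
    ∃ R ≥ 0, ∀ t ∈ Icc (0 : ℝ) 1, τ < ∑ i, arctan (p i + R + t * q i) := by
  have hlim : Tendsto (fun r => ∑ i, arctan (p i - |q i| + r)) atTop (𝓝 (∑ _i : ι, π / 2)) :=
    tendsto_finsetSum _ fun i _ => (tendsto_arctan_atTop.mono_right nhdsWithin_le_nhds).comp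
      (tendsto_atTop_add_const_left _ _ tendsto_id)
  have hτ' : τ < ∑ _i : ι, π / 2 :=
    hτ.trans_le (sum_le_sum fun i _ => (arctan_lt_pi_div_two _).le)
  obtain ⟨R, hR, hR0⟩ := ((hlim.eventually_const_lt hτ').and (eventually_ge_atTop 0)).exists
  refine ⟨R, hR0, fun t ht => hR.trans_le (sum_le_sum fun i _ => arctan_strictMono.monotone ?_)⟩
  nlinarith [neg_abs_le (q i), le_abs_self (q i), ht.1, ht.2]

lemma lt_sum_arctan_add_mul_of_critical_lt {p q : ι → ℝ} {τ : ℝ}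
    (hc : ((Fintype.card ι : ℝ) - 2) * π / 2 < τ) (h₀ : τ < ∑ i, arctan (p i))
    (h₁ : τ < ∑ i, arctan (p i + q i)) {t : ℝ} (ht : t ∈ Icc (0 : ℝ) 1) :
    τ < ∑ i, arctan (p i + t * q i) := by
  by_contra! hle
  have hq : q ≠ 0 := by
    rintro rfl
    simp only [Pi.zero_apply, mul_zero, add_zero] at hle
    linarith
  set F := fun r t => ∑ i, arctan (p i + r + t * q i)
  have hF : Continuous (Function.uncurry F) := by fun_prop
  have hmono : ∀ t, Monotone fun r => F r t := fun t _ _ h =>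
    sum_le_sum fun i _ => arctan_strictMono.monotone (by linarith)
  obtain ⟨R, hR0, hR⟩ := exists_forall_lt_sum_arctan_add p q h₀
  obtain ⟨r, s, -, hFs, hmin⟩ := exists_isLocalMin_eq_of_monotone hF hmono hR0 hR
    (by simpa [F] using h₀) (by simpa [F] using h₁) ht (by simpa [F] using hle)
  have hsuper : IsSupercritical fun i => (p i + r) + s * q i := hc.trans_eq hFs.symm
  exact hsuper.not_isLocalMin_sum_arctan_line _ _ hq hmin

theorem convex_setOf_lt_sum_arctan {τ : ℝ} (hτ : ((Fintype.card ι : ℝ) - 2) * π / 2 ≤ τ) :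
    Convex ℝ {x : ι → ℝ | τ < ∑ i, arctan (x i)} := by
  intro x (hx : τ < _) y (hy : τ < _) a b ha hb hab
  obtain ⟨σ, hτσ, hσ⟩ := _root_.exists_between (lt_min hx hy)
  have hcomb : a • x + b • y = fun i => x i + b * (y i - x i) := by
    ext i
    simp only [Pi.add_apply, Pi.smul_apply, smul_eq_mul, eq_sub_of_add_eq hab]
    ring
  show τ < ∑ i, arctan ((a • x + b • y) i)
  rw [hcomb]
  refine hτσ.trans (lt_sum_arctan_add_mul_of_critical_lt (hτ.trans_lt hτσ)
    (hσ.trans_le (min_le_left _ _)) ?_ ⟨hb, ?_⟩)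
  · simpa using hσ.trans_le (min_le_right _ _)
  · linarith

theorem stmt_2 (n : ℕ) (τ : ℝ)
    (hτ : ((n : ℝ) - 2) * π / 2 ≤ τ) :
    Convex ℝ {lam : Fin n → ℝ | τ < ∑ i, Real.arctan (lam i)} :=
  convex_setOf_lt_sum_arctan (by rwa [Fintype.card_fin])
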